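/- arXiv:1711.01761 — 4 statements merged into one kernel-verified Lean document; each statement's English description precedes it below -/
import Mathlib

section
/- Let Z be a real-valued random variable with p = P(Z ≠ 0) > 0, and let Z_1, ..., Z_N be i.i.d. copies of Z. Define A = 0 if all Z_i = 0, and A = (Σ_{i∈[N]} Z_i) / |{i : Z_i ≠ 0}| otherwise. Then E[A] = ((1 - (1-p)^N)/p) · E[Z]. -/
open MeasureTheory ProbabilityTheory
open scoped Classical

/-!
Split `Ω` according to the random set `K = {i | Zᵢ ≠ 0}`. On `{K = S}` the average `A` is
`(∑ i ∈ S, Zᵢ) / #S`, and for `i ∈ S` the variable `Zᵢ · 1{K = S}` is a product of functions of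
the individual `Zⱼ`: it is `Zᵢ` times the indicators of `{Zⱼ ≠ 0 ↔ j ∈ S}` for `j ≠ i` (the factor
for `j = i` is absorbed, as `Zᵢ · 1{Zᵢ ≠ 0} = Zᵢ`). Independence therefore gives
`p · E[Zᵢ · 1{K = S}] = E[Z] · p ^ #S · (1 - p) ^ (N - #S)`, the same for every `i ∈ S`, so
`p · E[A · 1{K = S}]` is that quantity whenever `S ≠ ∅`. Summing over the nonempty `S` with the
binomial theorem gives `p · E[A] = E[Z] · (1 - (1 - p) ^ N)`.
-/

open Finset

lemma prod_ite_mem_eq_pow_mul_pow {ι M : Type*} [Fintype ι] [CommMonoid M] (S : Finset ι)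
    (a b : M) : ∏ j, (if j ∈ S then a else b) = a ^ #S * b ^ (Fintype.card ι - #S) := by
  rw [prod_ite, prod_const, prod_const, filter_mem_eq_inter, univ_inter,
    filter_not, filter_mem_eq_inter, univ_inter, card_univ_sdiff]

lemma sum_card_mul_div_card {ι K : Type*} [Fintype ι] [Field K] [CharZero K]
    (f : Finset ι → K) : ∑ S, (#S * f S) / #S = ∑ S, f S - f ∅ := by
  rw [← sum_erase_eq_sub (mem_univ _), ← sum_erase_add _ _ (mem_univ ∅)]
  simp only [card_empty, Nat.cast_zero, zero_mul, div_zero, add_zero]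
  refine sum_congr rfl fun S hS => mul_div_cancel_left₀ _ ?_
  exact Nat.cast_ne_zero.2 (card_ne_zero.2 (nonempty_of_ne_empty (ne_of_mem_erase hS)))

noncomputable section

variable {ι : Type*}

def supportMatchIndicator (S : Finset ι) (j : ι) : ℝ → ℝ :=
  {x | x ≠ 0 ↔ j ∈ S}.indicator 1

lemma measurableSet_setOf_ne_zero_iff (S : Finset ι) (j : ι) :
    MeasurableSet {x : ℝ | x ≠ 0 ↔ j ∈ S} := by
  by_cases hj : j ∈ S
  · simp only [hj, iff_true]
    exact (measurableSet_singleton 0).compl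
  · simp only [hj, iff_false, not_not]
    exact measurableSet_singleton 0

lemma measurable_supportMatchIndicator (S : Finset ι) (j : ι) :
    Measurable (supportMatchIndicator S j) :=
  measurable_one.indicator (measurableSet_setOf_ne_zero_iff S j)

lemma integral_supportMatchIndicator_comp {Ω : Type*} [MeasurableSpace Ω] {μ : Measure Ω}
    {Z : Ω → ℝ} (hZ : Measurable Z) (S : Finset ι) (j : ι) :
    ∫ ω, supportMatchIndicator S j (Z ω) ∂μ =
      if j ∈ S then μ.real {ω | Z ω ≠ 0} else μ.real {ω | Z ω = 0} := by
  rw [supportMatchIndicator]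
  simp_rw [← Set.indicator_comp_right Z, Pi.one_comp]
  rw [integral_indicator_one (hZ (measurableSet_setOf_ne_zero_iff S j))]
  by_cases hj : j ∈ S <;> simp [hj]; rfl

variable [Fintype ι] {Ω : Type*}

def nonzeroIndices (X : ι → Ω → ℝ) (ω : Ω) : Finset ι :=
  univ.filter fun i => X i ω ≠ 0

lemma ite_nonzeroIndices_eq_prod (X : ι → Ω → ℝ) (ω : Ω) (S : Finset ι) :
    (if nonzeroIndices X ω = S then 1 else 0 : ℝ) = ∏ j, supportMatchIndicator S j (X j ω) := by
  simp only [supportMatchIndicator, Set.indicator_apply, Set.mem_ofPred_eq, Pi.one_apply,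
    Fintype.prod_boole, Finset.ext_iff, nonzeroIndices, mem_filter, mem_univ, true_and]

lemma mul_ite_nonzeroIndices_eq_prod (X : ι → Ω → ℝ) (ω : Ω) {S : Finset ι} {i : ι}
    (hi : i ∈ S) :
    X i ω * (if nonzeroIndices X ω = S then 1 else 0 : ℝ) =
      ∏ j, Function.update (supportMatchIndicator S) i id j (X j ω) := by
  rw [ite_nonzeroIndices_eq_prod, ← mul_prod_erase _ _ (mem_univ i),
    ← mul_prod_erase _ _ (mem_univ i), ← mul_assoc]
  congr 1
  · by_cases h : X i ω = 0 <;> simp [supportMatchIndicator, h, hi]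
  · exact prod_congr rfl fun j hj => by rw [Function.update_of_ne (ne_of_mem_erase hj)]

lemma sum_div_card_nonzeroIndices_eq_sum (X : ι → Ω → ℝ) (ω : Ω) :
    (∑ i, X i ω) / #(nonzeroIndices X ω) =
      ∑ S, (∑ i ∈ S, X i ω * (if nonzeroIndices X ω = S then 1 else 0)) / #S := by
  simp_rw [mul_ite, mul_one, mul_zero, sum_ite_irrel, sum_const_zero, ite_div, zero_div,
    sum_ite_eq, mem_univ, if_true, nonzeroIndices, sum_filter_ne_zero]

variable [MeasurableSpace Ω] {μ : Measure Ω}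

lemma probReal_setOf_eq_zero {Z : Ω → ℝ} [IsProbabilityMeasure μ] (hZ : Measurable Z) :
    μ.real {ω | Z ω = 0} = 1 - μ.real {ω | Z ω ≠ 0} := by
  rw [← probReal_compl_eq_one_sub (s := {ω | Z ω ≠ 0}) (hZ (measurableSet_singleton 0)).compl]
  congr 1
  ext
  simp

lemma integrable_mul_ite_nonzeroIndices {X : ι → Ω → ℝ} (hXm : ∀ j, Measurable (X j)) {i : ι}
    (hi : Integrable (X i) μ) (S : Finset ι) :
    Integrable (fun ω => X i ω * (if nonzeroIndices X ω = S then 1 else 0)) μ := by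
  refine hi.mul_bdd (c := 1) ?_ (ae_of_all _ fun ω => ?_)
  · simp_rw [ite_nonzeroIndices_eq_prod]
    exact (Finset.measurable_prod _ fun j _ =>
      (measurable_supportMatchIndicator S j).comp (hXm j)).aestronglyMeasurable
  · split_ifs <;> simp

lemma measureReal_mul_integral_mul_ite_nonzeroIndices {X : ι → Ω → ℝ} {Z : Ω → ℝ}
    (hX : iIndepFun X μ) (hXm : ∀ i, Measurable (X i)) (hZ : Measurable Z)
    (hid : ∀ i, IdentDistrib (X i) Z μ μ) {S : Finset ι} {i : ι} (hi : i ∈ S) :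
    μ.real {ω | Z ω ≠ 0} * ∫ ω, X i ω * (if nonzeroIndices X ω = S then 1 else 0) ∂μ =
      (∫ ω, Z ω ∂μ) *
        (μ.real {ω | Z ω ≠ 0} ^ #S * μ.real {ω | Z ω = 0} ^ (Fintype.card ι - #S)) := by
  set f := Function.update (supportMatchIndicator S) i id
  have hf (j : ι) : Measurable (f j) := by
    by_cases hj : j = i
    · subst hj
      simpa [f] using measurable_id
    · simpa [f, hj] using measurable_supportMatchIndicator S j
  have hident (j : ι) : ∫ ω, f j (X j ω) ∂μ = ∫ ω, f j (Z ω) ∂μ :=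
    ((hid j).comp (hf j)).integral_eq
  have hrest : ∀ j ∈ univ.erase i, ∫ ω, f j (Z ω) ∂μ =
      if j ∈ S then μ.real {ω | Z ω ≠ 0} else μ.real {ω | Z ω = 0} := fun j hj => by
    simp only [f, Function.update_of_ne (ne_of_mem_erase hj),
      integral_supportMatchIndicator_comp hZ]
  simp_rw [mul_ite_nonzeroIndices_eq_prod X _ hi]
  rw [hX.integral_fun_prod_comp (fun j => (hXm j).aemeasurable)
      (fun j => (hf j).aestronglyMeasurable), ← prod_ite_mem_eq_pow_mul_pow,
    ← mul_prod_erase _ _ (mem_univ i), ← mul_prod_erase univ _ (mem_univ i),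
    prod_congr rfl fun j hj => (hident j).trans (hrest j hj), hident i, if_pos hi]
  simp only [f, Function.update_self, id]
  ring

end

theorem adabatch_expectation_of_nonzero_average_general
    {Ω : Type*} [MeasureSpace Ω] [IsProbabilityMeasure (ℙ : Measure Ω)]
    (N : ℕ)
    (Z : Ω → ℝ) (Zi : Fin N → Ω → ℝ)
    (hZmeas : Measurable Z) (hZimeas : ∀ i, Measurable (Zi i))
    (hZint : Integrable Z ℙ)
    (hindep : iIndepFun Zi ℙ)
    (hid : ∀ i, IdentDistrib (Zi i) Z ℙ ℙ)
    (p : ℝ) (hpdef : p = (ℙ {ω | Z ω ≠ 0}).toReal) (hppos : 0 < p)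
    (A : Ω → ℝ)
    (hA : ∀ ω, A ω = if ∀ i, Zi i ω = 0 then 0
      else (∑ i, Zi i ω) / ((Finset.univ.filter (fun i => Zi i ω ≠ 0)).card : ℝ)) :
    ∫ ω, A ω ∂ℙ = ((1 - (1 - p) ^ N) / p) * ∫ ω, Z ω ∂ℙ := by
  have hp : (ℙ : Measure Ω).real {ω | Z ω ≠ 0} = p := hpdef.symm
  have hq : (ℙ : Measure Ω).real {ω | Z ω = 0} = 1 - p := hp ▸ probReal_setOf_eq_zero hZmeas
  -- the case split in `hA` is redundant, as `0 / 0 = 0`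
  have hA' (ω : Ω) : A ω = (∑ i, Zi i ω) / #(nonzeroIndices Zi ω) := by
    rw [hA]
    split_ifs with h
    · simp [h]
    · rfl
  have hint (S : Finset (Fin N)) (i : Fin N) :=
    integrable_mul_ite_nonzeroIndices hZimeas ((hid i).integrable_iff.2 hZint) S
  have hsum : p * ∫ ω, A ω = ∑ S : Finset (Fin N),
      #S * ((∫ ω, Z ω) * (p ^ #S * (1 - p) ^ (N - #S))) / #S := by
    rw [integral_congr_ae (ae_of_all _ fun ω =>
        (hA' ω).trans (sum_div_card_nonzeroIndices_eq_sum Zi ω)),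
      integral_finsetSum _ fun S _ => (integrable_finsetSum _ fun i _ => hint S i).div_const _,
      mul_sum]
    refine sum_congr rfl fun S _ => ?_
    rw [integral_div, integral_finsetSum _ fun i _ => hint S i, mul_div_assoc', mul_sum,
      sum_congr rfl fun i hi => ?_, sum_const, nsmul_eq_mul]
    rw [← hq, ← hp]
    simpa only [Fintype.card_fin] using
      measureReal_mul_integral_mul_ite_nonzeroIndices hindep hZimeas hZmeas hid hi
  simp only [sum_card_mul_div_card, ← mul_sum, Fin.sum_pow_mul_eq_add_pow, card_empty, pow_zero,
    Nat.sub_zero, one_mul, add_sub_cancel, one_pow] at hsum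
  field_simp
  linear_combination hsum

/-- Lemma 1 (expectation part): if `A` is the average of the nonzero entries among
`N` i.i.d. copies of `Z` (with `A = 0` if all vanish), then
`E[A] = ((1 - (1-p)^N)/p) E[Z]` where `p = P(Z ≠ 0) > 0`. -/
theorem adabatch_expectation_of_nonzero_average
    {Ω : Type*} [MeasureSpace Ω] [IsProbabilityMeasure (ℙ : Measure Ω)]
    (N : ℕ) (hN : 0 < N)
    (Z : Ω → ℝ) (Zi : Fin N → Ω → ℝ)
    (hZmeas : Measurable Z) (hZimeas : ∀ i, Measurable (Zi i))
    (hZint : Integrable Z ℙ)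
    (hindep : iIndepFun Zi ℙ)
    (hid : ∀ i, IdentDistrib (Zi i) Z ℙ ℙ)
    (p : ℝ) (hpdef : p = (ℙ {ω | Z ω ≠ 0}).toReal) (hppos : 0 < p)
    (A : Ω → ℝ)
    (hA : ∀ ω, A ω = if ∀ i, Zi i ω = 0 then 0
      else (∑ i, Zi i ω) / ((Finset.univ.filter (fun i => Zi i ω ≠ 0)).card : ℝ)) :
    ∫ ω, A ω ∂ℙ = ((1 - (1 - p) ^ N) / p) * ∫ ω, Z ω ∂ℙ :=
  adabatch_expectation_of_nonzero_average_general N Z Zi hZmeas hZimeas hZint hindep hid p hpdef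
    hppos A hA
end

section
/- Let Z be a real-valued random variable with p = P(Z ≠ 0) > 0, finite second moment, and let A be the average of the nonzero entries among N i.i.d. copies of Z (with A = 0 if all are zero). Then E[A²] ≤ ((1-(1-p)^N)²/p²)·E[Z]² + ((1-(1-p)^N)/p)·E[Z²]. -/
/-
With `w_i = 1 / (1 + #{j ≠ i | Z_j ≠ 0})`, which equals `1 / #{j | Z_j ≠ 0}` whenever `Z_i ≠ 0`,
Cauchy–Schwarz over the nonzero entries gives `A² ≤ ∑ i, Z_i² w_i`. Since `w_i` only depends on
the `Z_j` with `j ≠ i`, it is independent of `Z_i`, so `E[A²] ≤ E[Z²] ∑ i, E[w_i]`. The same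
computation with `1{Z_i ≠ 0}` in place of `Z_i²` gives `∑ i, 1{Z_i ≠ 0} w_i = 1{∃ i, Z_i ≠ 0}`,
hence `p ∑ i, E[w_i] = P(∃ i, Z_i ≠ 0) = 1 - (1 - p)^N`.
-/

open MeasureTheory ProbabilityTheory Finset

section Weights

variable {ι : Type*} [Fintype ι] [DecidableEq ι]

/-- `1 / #{j | x j ≠ 0}` when `x i ≠ 0`, but computed from the other coordinates only, so that it
is independent of `x i`. -/
noncomputable def othersWeight (x : ι → ℝ) (i : ι) : ℝ :=
  (1 + #{j ∈ {i}ᶜ | x j ≠ 0} : ℝ)⁻¹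

theorem othersWeight_nonneg (x : ι → ℝ) (i : ι) : 0 ≤ othersWeight x i := by
  unfold othersWeight; positivity

theorem othersWeight_le_one (x : ι → ℝ) (i : ι) : othersWeight x i ≤ 1 :=
  inv_le_one_of_one_le₀ (le_add_of_nonneg_right (Nat.cast_nonneg _))

theorem othersWeight_congr {x y : ι → ℝ} {i : ι} (h : ∀ j ≠ i, x j = y j) :
    othersWeight x i = othersWeight y i := by
  unfold othersWeight
  congr 4
  exact filter_congr fun j hj => by rw [h j (by simpa using hj)]

theorem othersWeight_of_ne_zero {x : ι → ℝ} {i : ι} (hi : x i ≠ 0) :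
    othersWeight x i = (#{j | x j ≠ 0} : ℝ)⁻¹ := by
  have hmem : i ∈ ({j | x j ≠ 0} : Finset ι) := by simpa using hi
  have herase : ({j ∈ {i}ᶜ | x j ≠ 0} : Finset ι) = ({j | x j ≠ 0} : Finset ι).erase i := by
    ext j; simp
  rw [othersWeight, herase, card_erase_of_mem hmem,
    Nat.cast_sub (card_pos.2 ⟨i, hmem⟩), Nat.cast_one, add_sub_cancel]

theorem sum_mul_othersWeight (x f : ι → ℝ) (hf : ∀ i, x i = 0 → f i = 0) :
    ∑ i, f i * othersWeight x i = (∑ i, f i) / #{j | x j ≠ 0} := by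
  rw [sum_div]
  refine sum_congr rfl fun i _ => ?_
  by_cases hi : x i = 0
  · simp [hf i hi]
  · rw [othersWeight_of_ne_zero hi, div_eq_mul_inv]

theorem sq_sum_div_card_ne_zero_le (x : ι → ℝ) :
    ((∑ i, x i) / #{j | x j ≠ 0}) ^ 2 ≤ ∑ i, x i ^ 2 * othersWeight x i := by
  have hsq : ∑ i, x i ^ 2 = ∑ i ∈ {j | x j ≠ 0}, x i ^ 2 :=
    (sum_filter_of_ne fun i _ h => by simpa using h).symm
  rw [sum_mul_othersWeight x _ fun i hi => by simp [hi], ← sum_filter_ne_zero, hsq]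
  exact sum_div_card_sq_le_sum_sq_div_card

theorem sum_indicator_mul_othersWeight (x : ι → ℝ) :
    ∑ i, ({0}ᶜ : Set ℝ).indicator 1 (x i) * othersWeight x i
      = {y : ι → ℝ | ∃ i, y i ≠ 0}.indicator 1 x := by
  have hcount : ∑ i, ({0}ᶜ : Set ℝ).indicator (1 : ℝ → ℝ) (x i) = #{j | x j ≠ 0} := by
    simp [Set.indicator_apply, natCast_card_filter]
  rw [sum_mul_othersWeight x _ fun i hi => by simp [hi], hcount]
  by_cases h : x ∈ {y : ι → ℝ | ∃ i, y i ≠ 0}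
  · rw [Set.indicator_of_mem h, Pi.one_apply, div_self]
    obtain ⟨i, hi⟩ := h
    exact Nat.cast_ne_zero.2 (card_ne_zero_of_mem (by simpa using hi))
  · rw [Set.indicator_of_notMem h]
    simp_all

end Weights

section Probability

variable {Ω ι : Type*} [MeasurableSpace Ω] {μ : Measure Ω}

theorem integral_indicator_one_comp {β : Type*} [MeasurableSpace β] {Y : Ω → β}
    (hY : AEMeasurable Y μ) {S : Set β} (hS : MeasurableSet S) :
    ∫ ω, S.indicator 1 (Y ω) ∂μ = μ.real (Y ⁻¹' S) := by
  change ∫ ω, (Y ⁻¹' S).indicator 1 ω ∂μ = _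
  rw [integral_indicator₀ (hY.nullMeasurableSet_preimage hS)]
  simp

variable [Fintype ι] {X : ι → Ω → ℝ}

theorem ProbabilityTheory.iIndepFun.measureReal_exists_ne_zero [IsProbabilityMeasure μ]
    (hX : iIndepFun X μ) (hXm : ∀ i, AEMeasurable (X i) μ) {p : ℝ}
    (hp : ∀ i, μ.real {ω | X i ω ≠ 0} = p) :
    μ.real {ω | ∃ i, X i ω ≠ 0} = 1 - (1 - p) ^ Fintype.card ι := by
  have hnull : ∀ i, NullMeasurableSet (X i ⁻¹' {0}) μ :=
    fun i => (hXm i).nullMeasurableSet_preimage (measurableSet_singleton 0)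
  have hzero : ∀ i, μ.real (X i ⁻¹' {0}) = 1 - p := fun i => by
    have hcompl : μ.real {ω | X i ω ≠ 0} = 1 - μ.real (X i ⁻¹' {0}) :=
      probReal_compl_eq_one_sub₀ (hnull i)
    linarith [hp i]
  have hall : μ.real (⋂ i, X i ⁻¹' {0}) = (1 - p) ^ Fintype.card ι := by
    rw [measureReal_def, hX.meas_iInter fun i => ⟨{0}, measurableSet_singleton 0, rfl⟩,
      ENNReal.toReal_prod]
    simp_rw [← measureReal_def, hzero, prod_const, card_univ]
  have hcompl : {ω | ∃ i, X i ω ≠ 0} = (⋂ i, X i ⁻¹' {0})ᶜ := by ext; simp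
  rw [hcompl, probReal_compl_eq_one_sub₀ (.iInter hnull), hall]

variable [DecidableEq ι]

theorem measurable_othersWeight (i : ι) : Measurable fun x : ι → ℝ => othersWeight x i := by
  simp_rw [othersWeight, natCast_card_filter]
  refine (measurable_const.add (measurable_sum _ fun j _ => ?_)).inv
  exact .ite ((measurable_pi_apply j) (measurableSet_singleton 0).compl) measurable_const
    measurable_const

theorem ProbabilityTheory.iIndepFun.indepFun_othersWeight (hX : iIndepFun X μ)
    (hXm : ∀ i, AEMeasurable (X i) μ) (i : ι) :
    IndepFun (X i) (fun ω => othersWeight (X · ω) i) μ := by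
  -- `othersWeight · i` factors through the restriction to `{i}ᶜ`
  let extend (v : ({i}ᶜ : Finset ι) → ℝ) (j : ι) : ℝ :=
    if h : j ∈ ({i}ᶜ : Finset ι) then v ⟨j, h⟩ else 0
  have hextend : Measurable extend := by
    refine measurable_pi_lambda _ fun j => ?_
    by_cases h : j ∈ ({i}ᶜ : Finset ι)
    · simpa only [extend, dif_pos h] using measurable_pi_apply _
    · simpa only [extend, dif_neg h] using measurable_const
  have hrest := (hX.indepFun_finset₀ {i} {i}ᶜ disjoint_compl_right hXm).comp
    (measurable_pi_apply ⟨i, mem_singleton_self i⟩) ((measurable_othersWeight i).comp hextend)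
  refine hrest.congr (.of_forall fun _ => rfl) (.of_forall fun ω => ?_)
  exact othersWeight_congr fun j hj => by simp [extend, hj]

theorem aemeasurable_othersWeight (hXm : ∀ i, AEMeasurable (X i) μ) (i : ι) :
    AEMeasurable (fun ω => othersWeight (X · ω) i) μ :=
  (measurable_othersWeight i).comp_aemeasurable (aemeasurable_pi_lambda _ hXm)

theorem ProbabilityTheory.iIndepFun.integral_comp_mul_othersWeight (hX : iIndepFun X μ)
    (hXm : ∀ i, AEMeasurable (X i) μ) {φ : ℝ → ℝ} (hφ : Measurable φ) (i : ι) :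
    ∫ ω, φ (X i ω) * othersWeight (X · ω) i ∂μ
      = (∫ ω, φ (X i ω) ∂μ) * ∫ ω, othersWeight (X · ω) i ∂μ :=
  ((hX.indepFun_othersWeight hXm i).comp hφ measurable_id).integral_mul_eq_mul_integral
    (hφ.comp_aemeasurable (hXm i)).aestronglyMeasurable
    (aemeasurable_othersWeight hXm i).aestronglyMeasurable

theorem MeasureTheory.Integrable.mul_othersWeight {f : Ω → ℝ} (hf : Integrable f μ)
    (hXm : ∀ i, AEMeasurable (X i) μ) (i : ι) :
    Integrable (fun ω => f ω * othersWeight (X · ω) i) μ :=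
  hf.mul_bdd (aemeasurable_othersWeight hXm i).aestronglyMeasurable (c := 1) <|
    .of_forall fun ω => by
      rw [Real.norm_of_nonneg (othersWeight_nonneg _ i)]
      exact othersWeight_le_one _ i

theorem ProbabilityTheory.iIndepFun.integral_sq_sum_div_card_ne_zero_le (hX : iIndepFun X μ)
    (hXm : ∀ i, AEMeasurable (X i) μ) (hsq : ∀ i, Integrable (fun ω => X i ω ^ 2) μ) :
    ∫ ω, ((∑ i, X i ω) / #{i | X i ω ≠ 0}) ^ 2 ∂μ
      ≤ ∑ i, (∫ ω, X i ω ^ 2 ∂μ) * ∫ ω, othersWeight (X · ω) i ∂μ := calc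
  _ ≤ ∫ ω, ∑ i, X i ω ^ 2 * othersWeight (X · ω) i ∂μ :=
    integral_mono_of_nonneg (.of_forall fun _ => sq_nonneg _)
      (integrable_finsetSum _ fun i _ => (hsq i).mul_othersWeight hXm i)
      (.of_forall fun ω => sq_sum_div_card_ne_zero_le (X · ω))
  _ = _ := by
    rw [integral_finsetSum _ fun i _ => (hsq i).mul_othersWeight hXm i]
    exact sum_congr rfl fun i _ =>
      hX.integral_comp_mul_othersWeight hXm (measurable_id.pow_const 2) i

theorem ProbabilityTheory.iIndepFun.sum_measureReal_ne_zero_mul_integral_othersWeight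
    [IsFiniteMeasure μ] (hX : iIndepFun X μ) (hXm : ∀ i, AEMeasurable (X i) μ) :
    ∑ i, μ.real {ω | X i ω ≠ 0} * ∫ ω, othersWeight (X · ω) i ∂μ
      = μ.real {ω | ∃ i, X i ω ≠ 0} := by
  let S : Set ℝ := {0}ᶜ
  have hS : Measurable (S.indicator (1 : ℝ → ℝ)) :=
    measurable_const.indicator (measurableSet_singleton 0).compl
  have hint : ∀ i, Integrable (fun ω => S.indicator 1 (X i ω) * othersWeight (X · ω) i) μ :=
    fun i => (Integrable.of_bound (hS.comp_aemeasurable (hXm i)).aestronglyMeasurable 1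
      (.of_forall fun _ => (norm_indicator_le_norm_self _ _).trans (by simp))).mul_othersWeight
        hXm i
  calc ∑ i, μ.real {ω | X i ω ≠ 0} * ∫ ω, othersWeight (X · ω) i ∂μ
      = ∑ i, ∫ ω, S.indicator 1 (X i ω) * othersWeight (X · ω) i ∂μ := by
        refine sum_congr rfl fun i _ => ?_
        rw [hX.integral_comp_mul_othersWeight hXm hS i,
          integral_indicator_one_comp (hXm i) (measurableSet_singleton 0).compl]
        rfl
    _ = ∫ ω, {y : ι → ℝ | ∃ i, y i ≠ 0}.indicator 1 (X · ω) ∂μ := by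
        rw [← integral_finsetSum _ fun i _ => hint i]
        exact integral_congr_ae (.of_forall fun ω => sum_indicator_mul_othersWeight (X · ω))
    _ = μ.real {ω | ∃ i, X i ω ≠ 0} :=
        integral_indicator_one_comp (aemeasurable_pi_lambda _ hXm) (by measurability)

end Probability

theorem adabatch_second_moment_bound_of_nonzero_average_general
    {Ω : Type*} [MeasureSpace Ω] [IsProbabilityMeasure (ℙ : Measure Ω)]
    (N : ℕ)
    (Z : Ω → ℝ) (Zi : Fin N → Ω → ℝ)
    (hZsq : Integrable (fun ω => (Z ω) ^ 2) ℙ)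
    (hindep : iIndepFun Zi ℙ)
    (hid : ∀ i, IdentDistrib (Zi i) Z ℙ ℙ)
    (p : ℝ) (hpdef : p = (ℙ {ω | Z ω ≠ 0}).toReal) (hppos : 0 < p)
    (A : Ω → ℝ)
    (hA : ∀ ω, A ω = if ∀ i, Zi i ω = 0 then 0
      else (∑ i, Zi i ω) / ((Finset.univ.filter (fun i => Zi i ω ≠ 0)).card : ℝ)) :
    ∫ ω, (A ω) ^ 2 ∂ℙ
      ≤ ((1 - (1 - p) ^ N) ^ 2 / p ^ 2) * (∫ ω, Z ω ∂ℙ) ^ 2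
        + ((1 - (1 - p) ^ N) / p) * ∫ ω, (Z ω) ^ 2 ∂ℙ := by
  have hZim : ∀ i, AEMeasurable (Zi i) ℙ := fun i => (hid i).aemeasurable_fst
  have hsq : ∀ i, IdentDistrib (fun ω => Zi i ω ^ 2) (fun ω => Z ω ^ 2) ℙ ℙ :=
    fun i => (hid i).comp (measurable_id.pow_const 2)
  have hp : ∀ i, (ℙ : Measure Ω).real {ω | Zi i ω ≠ 0} = p := fun i => by
    rw [hpdef, measureReal_def]
    exact congrArg ENNReal.toReal ((hid i).measure_mem_eq (measurableSet_singleton 0).compl)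
  -- if all `Zi i ω` vanish, the quotient is `0 / 0 = 0`
  have hA' : A = fun ω => (∑ i, Zi i ω) / #{i | Zi i ω ≠ 0} :=
    funext fun ω => by rw [hA]; split_ifs with h <;> simp [h]
  have hweights : ∑ i, ∫ ω, othersWeight (Zi · ω) i = (1 - (1 - p) ^ N) / p := by
    have hall := hindep.measureReal_exists_ne_zero hZim hp
    rw [Fintype.card_fin] at hall
    rw [eq_div_iff hppos.ne', ← hall,
      ← hindep.sum_measureReal_ne_zero_mul_integral_othersWeight hZim, sum_mul]
    simp only [hp, mul_comm]
  calc ∫ ω, A ω ^ 2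
      ≤ ∑ i, (∫ ω, Zi i ω ^ 2) * ∫ ω, othersWeight (Zi · ω) i :=
        hA' ▸ hindep.integral_sq_sum_div_card_ne_zero_le hZim
          fun i => (hsq i).integrable_iff.2 hZsq
    _ = ((1 - (1 - p) ^ N) / p) * ∫ ω, Z ω ^ 2 := by
        simp only [fun i => (hsq i).integral_eq, ← mul_sum, hweights, mul_comm]
    _ ≤ _ := le_add_of_nonneg_left (by positivity)

/-- Lemma 1 (second moment, upper bound): for `A` the average of the nonzero entries among
`N` i.i.d. copies of `Z` (0 if all vanish),
`E[A²] ≤ ((1-(1-p)^N)²/p²)E[Z]² + ((1-(1-p)^N)/p)E[Z²]`. -/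
theorem adabatch_second_moment_bound_of_nonzero_average
    {Ω : Type*} [MeasureSpace Ω] [IsProbabilityMeasure (ℙ : Measure Ω)]
    (N : ℕ) (hN : 0 < N)
    (Z : Ω → ℝ) (Zi : Fin N → Ω → ℝ)
    (hZmeas : Measurable Z) (hZimeas : ∀ i, Measurable (Zi i))
    (hZint : Integrable Z ℙ) (hZsq : Integrable (fun ω => (Z ω) ^ 2) ℙ)
    (hindep : iIndepFun Zi ℙ)
    (hid : ∀ i, IdentDistrib (Zi i) Z ℙ ℙ)
    (p : ℝ) (hpdef : p = (ℙ {ω | Z ω ≠ 0}).toReal) (hppos : 0 < p)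
    (A : Ω → ℝ)
    (hA : ∀ ω, A ω = if ∀ i, Zi i ω = 0 then 0
      else (∑ i, Zi i ω) / ((Finset.univ.filter (fun i => Zi i ω ≠ 0)).card : ℝ)) :
    ∫ ω, (A ω) ^ 2 ∂ℙ
      ≤ ((1 - (1 - p) ^ N) ^ 2 / p ^ 2) * (∫ ω, Z ω ∂ℙ) ^ 2
        + ((1 - (1 - p) ^ N) / p) * ∫ ω, (Z ω) ^ 2 ∂ℙ :=
  adabatch_second_moment_bound_of_nonzero_average_general N Z Zi hZsq hindep hid p hpdef hppos A hA
end

section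
/- Let M ~ Binomial(N, p) with Np ≥ 5. Then E[1/M | M > 0] ≤ 5/(Np). -/
/-!
Since `1 / k ≤ 2 / (k + 1)` for `k ≥ 1`, it suffices to bound `E[1 / (M + 1); M > 0]`. By the
absorption identity `(N + 1) C(N, k) = (k + 1) C(N + 1, k + 1)`, `E[1 / (M + 1)]` is computed exactly
by the binomial theorem for `N + 1`, which gives `E[1 / M | M > 0] ≤ 2 / ((N + 1) p)`.
-/

open Finset

theorem mul_sum_choose_mul_pow_div_succ {K : Type*} [Field K] [CharZero K] (N : ℕ) (p q : K) :
    ((N + 1) * p) * ∑ k ∈ range (N + 1), (N.choose k : K) * p ^ k * q ^ (N - k) / (k + 1)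
      = (p + q) ^ (N + 1) - q ^ (N + 1) := by
  have absorb : ∀ k ∈ range (N + 1),
      ((N + 1) * p) * ((N.choose k : K) * p ^ k * q ^ (N - k) / (k + 1))
        = p ^ (k + 1) * q ^ (N + 1 - (k + 1)) * ((N + 1).choose (k + 1) : K) := by
    intro k _
    have h : ((N : K) + 1) * N.choose k = (N + 1).choose (k + 1) * ((k : K) + 1) := by
      exact_mod_cast Nat.add_one_mul_choose_eq N k
    rw [Nat.add_sub_add_right]
    field_simp
    linear_combination p ^ (k + 1) * q ^ (N - k) * h
  rw [mul_sum, sum_congr rfl absorb, add_pow, sum_range_succ' _ (N + 1)]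
  simp

theorem mul_sum_Icc_choose_mul_pow_div_succ {K : Type*} [Field K] [CharZero K] (N : ℕ) (p : K) :
    ((N + 1) * p) * ∑ k ∈ Icc 1 N, (N.choose k : K) * p ^ k * (1 - p) ^ (N - k) / (k + 1)
      = 1 - (1 - p) ^ (N + 1) - (N + 1) * p * (1 - p) ^ N := by
  have peel := sum_eq_sum_Ico_succ_bot (b := N + 1) N.zero_lt_succ
    (fun k => (N.choose k : K) * p ^ k * (1 - p) ^ (N - k) / (k + 1))
  rw [← range_eq_Ico, zero_add, Ico_add_one_right_eq_Icc] at peel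
  have total := mul_sum_choose_mul_pow_div_succ N p (1 - p)
  rw [peel] at total
  simp only [Nat.choose_zero_right, pow_zero, Nat.sub_zero, Nat.cast_zero, add_sub_cancel,
    one_pow] at total
  linear_combination total

theorem mul_sum_Icc_binomial_inv_le (N : ℕ) {p : ℝ} (hp : 0 ≤ p) (hp1 : p ≤ 1) :
    ((N + 1) * p) * ∑ k ∈ Icc 1 N, (N.choose k : ℝ) * p ^ k * (1 - p) ^ (N - k) * (1 / (k : ℝ))
      ≤ 2 * (1 - (1 - p) ^ N) := by
  have termwise : ∑ k ∈ Icc 1 N, (N.choose k : ℝ) * p ^ k * (1 - p) ^ (N - k) * (1 / (k : ℝ))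
      ≤ 2 * ∑ k ∈ Icc 1 N, (N.choose k : ℝ) * p ^ k * (1 - p) ^ (N - k) / (k + 1) := by
    rw [mul_sum]
    refine sum_le_sum fun k hk => ?_
    have hk : (1 : ℝ) ≤ k := by exact_mod_cast (mem_Icc.mp hk).1
    have weight_nonneg : 0 ≤ (N.choose k : ℝ) * p ^ k * (1 - p) ^ (N - k) := by
      have : 0 ≤ 1 - p := by linarith
      positivity
    have inv_le : 1 / (k : ℝ) ≤ 2 / (k + 1) := by
      rw [div_le_div_iff₀ (by linarith) (by linarith)]
      linarith
    calc _ ≤ (N.choose k : ℝ) * p ^ k * (1 - p) ^ (N - k) * (2 / (k + 1)) := by gcongr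
      _ = _ := by ring
  have exact_value := mul_sum_Icc_choose_mul_pow_div_succ N p
  have tail_nonneg : 0 ≤ N * p * (1 - p) ^ N := by
    have : 0 ≤ 1 - p := by linarith
    positivity
  calc _ ≤ ((N + 1) * p) * (2 * ∑ k ∈ Icc 1 N,
          (N.choose k : ℝ) * p ^ k * (1 - p) ^ (N - k) / (k + 1)) := by gcongr
    _ ≤ 2 * (1 - (1 - p) ^ N) := by
      rw [mul_left_comm, exact_value, pow_succ]
      linarith

theorem binomial_cond_inverse_moment_le_two_div (N : ℕ) {p : ℝ} (hp : 0 < p) (hp1 : p ≤ 1) :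
    (∑ k ∈ Icc 1 N, (N.choose k : ℝ) * p ^ k * (1 - p) ^ (N - k) * (1 / (k : ℝ)))
        / (1 - (1 - p) ^ N)
      ≤ 2 / ((N + 1) * p) := by
  have no_success_le_one : (1 - p) ^ N ≤ 1 := pow_le_one₀ (by linarith) (by linarith)
  rcases (sub_nonneg.mpr no_success_le_one).eq_or_lt with h | h
  · rw [← h, div_zero]
    positivity
  · rw [div_le_div_iff₀ h (by positivity), mul_comm]
    exact mul_sum_Icc_binomial_inv_le N hp.le hp1

/-- If `M ~ Binomial(N, p)` with `Np ≥ 5`, then `E[1/M | M > 0] ≤ 5/(Np)`.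
The conditional expectation is written explicitly via the binomial distribution:
`E[1/M | M>0] = (Σ_{k=1}^N C(N,k) p^k (1-p)^{N-k} / k) / P(M > 0)` with
`P(M > 0) = 1 - (1-p)^N`. -/
theorem binomial_cond_inverse_moment_le
    (N : ℕ) (p : ℝ) (hp : 0 < p) (hp1 : p ≤ 1) (hNp : 5 ≤ (N : ℝ) * p) :
    (∑ k ∈ Finset.Icc 1 N, (N.choose k : ℝ) * p ^ k * (1 - p) ^ (N - k) * (1 / (k : ℝ)))
        / (1 - (1 - p) ^ N)
      ≤ 5 / ((N : ℝ) * p) := by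
  have hNp_pos : 0 < (N : ℝ) * p := by linarith
  calc _ ≤ 2 / ((N + 1) * p) := binomial_cond_inverse_moment_le_two_div N hp hp1
    _ ≤ 2 / (N * p) := by gcongr; linarith
    _ ≤ 5 / (N * p) := by gcongr; norm_num
end

section
/- Let X be a random vector in {0,1}^d with uncorrelated coordinates and coordinate means p^(k), and let φ be a random convex function with m ≤ φ'' ≤ M on a convex compact set D, independent structure as in the model f(w) = φ(Xᵀw). Then for all w ∈ D, the Hessian F''(w) of F(w) = E[φ(Xᵀw)] satisfies m(1 - p_max) Diag(p) ⪯ F''(w) ⪯ M(1 + Σ_k p^(k)) Diag(p). -/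
/-!
The quadratic form of `F''(w)` at `v` is `E[φ''(Xᵀw) (vᵀX)²]`, so `m ≤ φ'' ≤ M` sandwiches
`F''(w)` between `m S` and `M S` in the Loewner order, where `S = E[X Xᵀ]`. For uncorrelated
`{0,1}`-valued coordinates `S = p pᵀ + Diag(p (1 - p))`: discarding `p pᵀ` and using
`p_k ≤ p_max` gives the lower bound, and Cauchy–Schwarz, `p pᵀ ⪯ (Σ_k p_k) Diag(p)`, the upper one.
-/

open MeasureTheory ProbabilityTheory Matrix
open scoped MatrixOrder

section MomentMatrix

variable {Ω ι : Type*} [MeasurableSpace Ω]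

noncomputable def momentMatrix (μ : Measure Ω) (g : Ω → ℝ) (X : Ω → ι → ℝ) : Matrix ι ι ℝ :=
  of fun i j => ∫ ω, g ω * X ω i * X ω j ∂μ

variable {μ : Measure Ω} {g h : Ω → ℝ} {X : Ω → ι → ℝ}

theorem momentMatrix_apply (i j : ι) :
    momentMatrix μ g X i j = ∫ ω, g ω * X ω i * X ω j ∂μ := rfl

theorem dotProduct_momentMatrix_mulVec [Fintype ι]
    (hg : ∀ i j, Integrable (fun ω => g ω * X ω i * X ω j) μ) (v : ι → ℝ) :
    v ⬝ᵥ momentMatrix μ g X *ᵥ v = ∫ ω, g ω * (v ⬝ᵥ X ω) ^ 2 ∂μ := by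
  have hexp : ∀ ω, g ω * (v ⬝ᵥ X ω) ^ 2 = ∑ i, ∑ j, v i * v j * (g ω * X ω i * X ω j) := by
    intro ω
    rw [dotProduct, sq, Finset.sum_mul_sum, Finset.mul_sum]
    refine Finset.sum_congr rfl fun i _ => ?_
    rw [Finset.mul_sum]
    exact Finset.sum_congr rfl fun j _ => by ring
  simp_rw [hexp]
  rw [integral_finsetSum _ fun i _ => integrable_finsetSum _ fun j _ => (hg i j).const_mul _]
  simp_rw [integral_finsetSum _ fun j _ => (hg _ j).const_mul _, integral_const_mul]
  simp only [dotProduct, mulVec, momentMatrix_apply, Finset.mul_sum]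
  exact Finset.sum_congr rfl fun i _ => Finset.sum_congr rfl fun j _ => by ring

theorem posSemidef_momentMatrix [Fintype ι] (hg₀ : ∀ ω, 0 ≤ g ω)
    (hg : ∀ i j, Integrable (fun ω => g ω * X ω i * X ω j) μ) :
    (momentMatrix μ g X).PosSemidef := by
  refine posSemidef_iff_dotProduct_mulVec.2 ⟨?_, fun v => ?_⟩
  · refine IsHermitian.ext fun i j => ?_
    simp only [star_trivial, momentMatrix_apply, mul_right_comm]
  · rw [star_trivial, dotProduct_momentMatrix_mulVec hg]
    exact integral_nonneg fun ω => mul_nonneg (hg₀ ω) (sq_nonneg _)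

theorem momentMatrix_sub (hg : ∀ i j, Integrable (fun ω => g ω * X ω i * X ω j) μ)
    (hh : ∀ i j, Integrable (fun ω => h ω * X ω i * X ω j) μ) :
    momentMatrix μ g X - momentMatrix μ h X = momentMatrix μ (g - h) X := by
  ext i j
  simp only [Matrix.sub_apply, momentMatrix_apply, Pi.sub_apply, sub_mul]
  exact (integral_sub (hg i j) (hh i j)).symm

theorem momentMatrix_mono [Fintype ι] (hgh : ∀ ω, g ω ≤ h ω)
    (hg : ∀ i j, Integrable (fun ω => g ω * X ω i * X ω j) μ)
    (hh : ∀ i j, Integrable (fun ω => h ω * X ω i * X ω j) μ) :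
    momentMatrix μ g X ≤ momentMatrix μ h X := by
  rw [le_iff, momentMatrix_sub hh hg]
  exact posSemidef_momentMatrix (fun ω => sub_nonneg.2 (hgh ω)) fun i j =>
    by simpa only [Pi.sub_apply, sub_mul] using (hh i j).sub' (hg i j)

theorem momentMatrix_const (c : ℝ) :
    momentMatrix μ (fun _ => c) X = c • momentMatrix μ 1 X := by
  ext i j
  simp only [Matrix.smul_apply, momentMatrix_apply, Pi.one_apply, one_mul, smul_eq_mul,
    mul_assoc, integral_const_mul]

theorem momentMatrix_one_eq_of_uncorrelated [DecidableEq ι]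
    (hX01 : ∀ ω k, X ω k = 0 ∨ X ω k = 1) {p : ι → ℝ} (hp : ∀ k, p k = ∫ ω, X ω k ∂μ)
    (huncor : ∀ k k', k ≠ k' → ∫ ω, X ω k * X ω k' ∂μ = (∫ ω, X ω k ∂μ) * ∫ ω, X ω k' ∂μ) :
    momentMatrix μ 1 X = vecMulVec p p + diagonal fun k => p k * (1 - p k) := by
  ext k k'
  simp only [momentMatrix_apply, Pi.one_apply, one_mul, Matrix.add_apply, vecMulVec_apply,
    diagonal_apply]
  by_cases hkk' : k = k'
  · subst hkk'
    have hidem : ∀ ω, X ω k * X ω k = X ω k := fun ω => by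
      rcases hX01 ω k with hx | hx <;> simp [hx]
    simp only [hidem, if_true, ← hp]
    ring
  · rw [huncor k k' hkk', if_neg hkk', ← hp, ← hp, add_zero]

end MomentMatrix

theorem integrable_mul_apply_of_zero_one {Ω ι : Type*} [MeasurableSpace Ω] {μ : Measure Ω}
    [IsFiniteMeasure μ] {X : Ω → ι → ℝ} (hX : Measurable X) (hX01 : ∀ ω k, X ω k = 0 ∨ X ω k = 1)
    (i j : ι) : Integrable (fun ω => X ω i * X ω j) μ := by
  refine .of_bound (((measurable_pi_apply i).comp hX).mul
    ((measurable_pi_apply j).comp hX)).aestronglyMeasurable 1 (.of_forall fun ω => ?_)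
  rcases hX01 ω i with hi | hi <;> rcases hX01 ω j with hj | hj <;> simp [hi, hj]

section Loewner

variable {ι : Type*} [Fintype ι] [DecidableEq ι]

theorem posSemidef_sum_smul_diagonal_sub_vecMulVec {p : ι → ℝ} (hp : 0 ≤ p) :
    ((∑ k, p k) • diagonal p - vecMulVec p p).PosSemidef := by
  refine posSemidef_iff_dotProduct_mulVec.2 ⟨?_, fun v => ?_⟩
  · exact ((PosSemidef.diagonal hp).smul (Finset.sum_nonneg fun k _ => hp k)).isHermitian.sub
      (posSemidef_vecMulVec_self_star p).isHermitian
  · have hCS : (∑ k, v k * p k) ^ 2 ≤ (∑ k, v k ^ 2 * p k) * ∑ k, p k :=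
      Finset.sum_sq_le_sum_mul_sum_of_sq_le_mul _
        (fun k _ => mul_nonneg (sq_nonneg _) (hp k)) (fun k _ => hp k) fun k _ => le_of_eq (by ring)
    have hdiag : v ⬝ᵥ diagonal p *ᵥ v = ∑ k, v k ^ 2 * p k := by
      simp only [dotProduct, mulVec_diagonal]
      exact Finset.sum_congr rfl fun k _ => by ring
    have hrank1 : v ⬝ᵥ vecMulVec p p *ᵥ v = (∑ k, v k * p k) ^ 2 := by
      rw [vecMulVec_mulVec, dotProduct_smul, op_smul_eq_mul, dotProduct_comm p v, sq]
      rfl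
    rw [star_trivial, sub_mulVec, dotProduct_sub, smul_mulVec, dotProduct_smul, smul_eq_mul,
      hdiag, hrank1, sub_nonneg, mul_comm]
    exact hCS

theorem smul_diagonal_le_vecMulVec_add_diagonal {p : ι → ℝ} {q : ℝ} (hp : 0 ≤ p)
    (hpq : ∀ k, p k ≤ q) :
    (1 - q) • diagonal p ≤ vecMulVec p p + diagonal fun k => p k * (1 - p k) := by
  have hsplit : vecMulVec p p + diagonal (fun k => p k * (1 - p k))
      = (1 - q) • diagonal p + (vecMulVec p p + diagonal fun k => p k * (q - p k)) := by
    ext i j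
    by_cases hij : i = j
    · subst hij; simp only [Matrix.add_apply, Matrix.smul_apply, diagonal_apply_eq]; ring
    · simp [hij]
  rw [hsplit]
  refine le_add_of_nonneg_right (PosSemidef.nonneg ?_)
  exact (posSemidef_vecMulVec_self_star p).add
    (PosSemidef.diagonal fun k => mul_nonneg (hp k) (sub_nonneg.2 (hpq k)))

theorem vecMulVec_add_diagonal_le_smul_diagonal {p : ι → ℝ} (hp : 0 ≤ p) :
    vecMulVec p p + diagonal (fun k => p k * (1 - p k)) ≤ (1 + ∑ k, p k) • diagonal p := by
  have hsplit : (1 + ∑ k, p k) • diagonal p = (vecMulVec p p + diagonal fun k => p k * (1 - p k))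
      + (((∑ k, p k) • diagonal p - vecMulVec p p) + diagonal fun k => p k ^ 2) := by
    ext i j
    by_cases hij : i = j
    · subst hij
      simp only [Matrix.add_apply, Matrix.sub_apply, Matrix.smul_apply, diagonal_apply_eq]; ring
    · simp [hij]
  rw [hsplit]
  refine le_add_of_nonneg_right (PosSemidef.nonneg ?_)
  exact (posSemidef_sum_smul_diagonal_sub_vecMulVec hp).add
    (PosSemidef.diagonal fun k => sq_nonneg (p k))

end Loewner

theorem sparse_linear_prediction_hessian_bounds_general
    {Ω : Type*} [MeasureSpace Ω] [IsProbabilityMeasure (ℙ : Measure Ω)]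
    (d : ℕ) (X : Ω → Fin d → ℝ) (hXmeas : Measurable X)
    (hX01 : ∀ ω k, X ω k = 0 ∨ X ω k = 1)
    (φ'' : Ω → ℝ → ℝ) (m M : ℝ) (hm : 0 < m) (hM : 0 < M)
    (D : Set (Fin d → ℝ))
    (hφ : ∀ ω, ∀ w ∈ D, m ≤ φ'' ω (∑ j, X ω j * w j) ∧ φ'' ω (∑ j, X ω j * w j) ≤ M)
    (p : Fin d → ℝ) (hp : ∀ k, p k = ∫ ω, X ω k ∂ℙ)
    (pmax : ℝ) (hpmax : IsGreatest (Set.range p) pmax)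
    (huncor : ∀ k k', k ≠ k' →
      ∫ ω, X ω k * X ω k' ∂ℙ = (∫ ω, X ω k ∂ℙ) * ∫ ω, X ω k' ∂ℙ)
    (hint : ∀ w ∈ D, ∀ k k',
      Integrable (fun ω => φ'' ω (∑ j, X ω j * w j) * X ω k * X ω k') ℙ)
    (F'' : (Fin d → ℝ) → Matrix (Fin d) (Fin d) ℝ)
    (hF'' : ∀ w k k',
      F'' w k k' = ∫ ω, φ'' ω (∑ j, X ω j * w j) * X ω k * X ω k' ∂ℙ) :
    ∀ w ∈ D,
      (F'' w - (m * (1 - pmax)) • Matrix.diagonal p).PosSemidef ∧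
      ((M * (1 + ∑ k, p k)) • Matrix.diagonal p - F'' w).PosSemidef := by
  intro w hw
  have hF : F'' w = momentMatrix ℙ (fun ω => φ'' ω (∑ j, X ω j * w j)) X := ext (hF'' w)
  have hS := momentMatrix_one_eq_of_uncorrelated hX01 hp huncor
  have hconst (c : ℝ) (i j : Fin d) : Integrable (fun ω => c * X ω i * X ω j) ℙ := by
    simpa only [mul_assoc] using (integrable_mul_apply_of_zero_one hXmeas hX01 i j).const_mul c
  have hp₀ : 0 ≤ p := fun k => (hp k).symm ▸
    integral_nonneg fun ω => by rcases hX01 ω k with hx | hx <;> simp [hx]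
  constructor
  · refine Matrix.le_iff.1 ?_
    calc (m * (1 - pmax)) • diagonal p = m • ((1 - pmax) • diagonal p) := mul_smul _ _ _
      _ ≤ m • momentMatrix ℙ 1 X := smul_le_smul_of_nonneg_left
          (hS ▸ smul_diagonal_le_vecMulVec_add_diagonal hp₀ fun k => hpmax.2 ⟨k, rfl⟩) hm.le
      _ = momentMatrix ℙ (fun _ => m) X := (momentMatrix_const m).symm
      _ ≤ F'' w := hF ▸ momentMatrix_mono (fun ω => (hφ ω w hw).1) (hconst m) (hint w hw)
  · refine Matrix.le_iff.1 ?_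
    calc F'' w ≤ momentMatrix ℙ (fun _ => M) X :=
          hF ▸ momentMatrix_mono (fun ω => (hφ ω w hw).2) (hint w hw) (hconst M)
      _ = M • momentMatrix ℙ 1 X := momentMatrix_const M
      _ ≤ M • ((1 + ∑ k, p k) • diagonal p) := smul_le_smul_of_nonneg_left
          (hS ▸ vecMulVec_add_diagonal_le_smul_diagonal hp₀) hM.le
      _ = (M * (1 + ∑ k, p k)) • diagonal p := (mul_smul _ _ _).symm

/-- For the sparse linear prediction model `f(w) = φ(Xᵀw)` with `X ∈ {0,1}^d` having
pairwise uncorrelated coordinates with means `p` and `m ≤ φ'' ≤ M` on `D`, the Hessian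
`F''(w) = E[φ''(Xᵀw) X Xᵀ]` satisfies
`m(1 - p_max) Diag(p) ⪯ F''(w) ⪯ M(1 + Σ_k p_k) Diag(p)` for all `w ∈ D`. -/
theorem sparse_linear_prediction_hessian_bounds
    {Ω : Type*} [MeasureSpace Ω] [IsProbabilityMeasure (ℙ : Measure Ω)]
    (d : ℕ) (X : Ω → Fin d → ℝ) (hXmeas : Measurable X)
    (hX01 : ∀ ω k, X ω k = 0 ∨ X ω k = 1)
    (φ'' : Ω → ℝ → ℝ) (m M : ℝ) (hm : 0 < m) (hM : 0 < M)
    (D : Set (Fin d → ℝ)) (hD : Convex ℝ D) (hDc : IsCompact D)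
    (hφ : ∀ ω, ∀ w ∈ D, m ≤ φ'' ω (∑ j, X ω j * w j) ∧ φ'' ω (∑ j, X ω j * w j) ≤ M)
    (p : Fin d → ℝ) (hp : ∀ k, p k = ∫ ω, X ω k ∂ℙ)
    (pmax : ℝ) (hpmax : IsGreatest (Set.range p) pmax)
    (huncor : ∀ k k', k ≠ k' →
      ∫ ω, X ω k * X ω k' ∂ℙ = (∫ ω, X ω k ∂ℙ) * ∫ ω, X ω k' ∂ℙ)
    (hint : ∀ w ∈ D, ∀ k k',
      Integrable (fun ω => φ'' ω (∑ j, X ω j * w j) * X ω k * X ω k') ℙ)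
    (F'' : (Fin d → ℝ) → Matrix (Fin d) (Fin d) ℝ)
    (hF'' : ∀ w k k',
      F'' w k k' = ∫ ω, φ'' ω (∑ j, X ω j * w j) * X ω k * X ω k' ∂ℙ) :
    ∀ w ∈ D,
      (F'' w - (m * (1 - pmax)) • Matrix.diagonal p).PosSemidef ∧
      ((M * (1 + ∑ k, p k)) • Matrix.diagonal p - F'' w).PosSemidef :=
  sparse_linear_prediction_hessian_bounds_general d X hXmeas hX01 φ'' m M hm hM D hφ p hp pmax hpmax
    huncor hint F'' hF''
end
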